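/- Let X be a nominal set over an infinite type 𝔸 with decidable equality. Then every x ∈ X has a least finite support, namely Supp(x) := the intersection of all finite supports of x; this set is finite, supports x, and is contained in every finite support of x. -/

import Mathlib

/-!
When `𝔸` is infinite, finite supports of `x` are closed under binary intersection. A finitary
permutation fixing `A ∩ B` pointwise is a product of transpositions of names outside `A ∩ B`,
and each such transposition `(a b)` fixes `x`: for a fresh name `c ∉ A ∪ B`, both `(a c)` and
`(c b)` fix one of the two supports, and `(a b)` lies in the group they generate. Consequently a
finite support of least cardinality is contained in every finite support, so it is the
intersection of all of them.
-/

/-- The subgroup of finitary permutations of `𝔸`: permutations moving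
only finitely many elements. -/
def FinPerm (𝔸 : Type*) : Subgroup (Equiv.Perm 𝔸) where
  carrier := {π : Equiv.Perm 𝔸 | {a | π a ≠ a}.Finite}
  one_mem' := by simp
  mul_mem' := by
    intro π σ hπ hσ
    refine (hπ.union hσ).subset ?_
    intro a ha
    by_contra h
    simp only [Set.mem_union, Set.mem_setOf_eq, not_or, not_not] at h
    exact ha (by simp [Equiv.Perm.mul_apply, h.1, h.2])
  inv_mem' := by
    intro π hπ
    refine hπ.subset ?_
    intro a ha
    simp only [Set.mem_setOf_eq] at *
    intro h
    exact ha (by nth_rewrite 1 [← h]; exact Equiv.symm_apply_apply π a)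

/-- `A` supports `x`: every finitary permutation fixing `A` pointwise fixes `x`. -/
def NSupports (𝔸 : Type*) {X : Type*} [MulAction (FinPerm 𝔸) X] (A : Set 𝔸) (x : X) : Prop :=
  ∀ π : FinPerm 𝔸, (∀ a ∈ A, π.1 a = a) → π • x = x

open Equiv MulAction

theorem Set.sInter_mem_of_inter_mem {α : Type*} {𝒮 : Set (Set α)}
    (hfin : ∀ A ∈ 𝒮, A.Finite) (hne : 𝒮.Nonempty) (hinter : ∀ A ∈ 𝒮, ∀ B ∈ 𝒮, A ∩ B ∈ 𝒮) :
    ⋂₀ 𝒮 ∈ 𝒮 := by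
  obtain ⟨M, hM, hmin⟩ := (measure Set.ncard).wf.has_min 𝒮 hne
  have hM_subset : ∀ B ∈ 𝒮, M ⊆ B := fun B hB =>
    have hMB : M ∩ B = M := Set.eq_of_subset_of_ncard_le Set.inter_subset_left
      (not_lt.mp (hmin _ (hinter M hM B hB))) (hfin M hM)
    hMB ▸ Set.inter_subset_right
  rwa [(Set.sInter_subset_of_mem hM).antisymm (Set.subset_sInter hM_subset)]

theorem Equiv.Perm.mem_of_swap_mem {α : Type*} [DecidableEq α] {H : Subgroup (Perm α)}
    {C : Set α} (hH : ∀ a ∉ C, ∀ b ∉ C, swap a b ∈ H) {f : Perm α}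
    (hf : (fixedBy α f)ᶜ.Finite) (hfC : ∀ c ∈ C, f c = c) : f ∈ H := by
  let S : Set (Perm α) := {σ | σ.IsSwap ∧ σ ∈ H}
  suffices f ∈ Subgroup.closure S from
    (Subgroup.closure_le H).mpr (fun σ hσ => hσ.2) this
  refine (mem_closure_isSwap fun σ hσ => hσ.1).mpr ⟨hf, fun y => ?_⟩
  by_cases hfy : f y = y
  · rw [hfy]
    exact mem_orbit_self y
  have hy : y ∉ C := fun hyC => hfy (hfC y hyC)
  have hfy' : f y ∉ C := fun hfyC => hfy (f.injective (hfC _ hfyC))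
  have hswap : swap y (f y) ∈ S := ⟨⟨y, f y, Ne.symm hfy, rfl⟩, hH y hy (f y) hfy'⟩
  exact ⟨⟨_, Subgroup.subset_closure hswap⟩, swap_apply_left y (f y)⟩

theorem FinPerm.swap_mem {𝔸 : Type*} [DecidableEq 𝔸] (a b : 𝔸) : swap a b ∈ FinPerm 𝔸 :=
  finite_compl_fixedBy_swap

section Supports

variable {𝔸 X : Type*} [MulAction (FinPerm 𝔸) X] {A B : Set 𝔸} {x : X}

variable (𝔸) in
def permStabilizer (x : X) : Subgroup (Perm 𝔸) :=
  (stabilizer (FinPerm 𝔸) x).map (FinPerm 𝔸).subtype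

theorem mem_permStabilizer {π : FinPerm 𝔸} : π.1 ∈ permStabilizer 𝔸 x ↔ π • x = x :=
  Subgroup.mem_map_iff_mem (FinPerm 𝔸).subtype_injective

theorem NSupports.swap_mem_permStabilizer [DecidableEq 𝔸] (hAx : NSupports 𝔸 A x)
    {a b : 𝔸} (ha : a ∉ A) (hb : b ∉ A) : swap a b ∈ permStabilizer 𝔸 x :=
  mem_permStabilizer (π := ⟨swap a b, FinPerm.swap_mem a b⟩).mpr <| hAx _ fun _ hc =>
    swap_apply_of_ne_of_ne (ne_of_mem_of_not_mem hc ha) (ne_of_mem_of_not_mem hc hb)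

theorem NSupports.swap_mem_permStabilizer_of_notMem_inter [Infinite 𝔸] [DecidableEq 𝔸]
    (hA : A.Finite) (hB : B.Finite) (hAx : NSupports 𝔸 A x) (hBx : NSupports 𝔸 B x)
    {a b : 𝔸} (ha : a ∉ A ∩ B) (hb : b ∉ A ∩ B) : swap a b ∈ permStabilizer 𝔸 x := by
  obtain ⟨c, hc⟩ := (hA.union hB).infinite_compl.nonempty
  obtain ⟨hcA, hcB⟩ : c ∉ A ∧ c ∉ B := by
    simpa only [Set.mem_compl_iff, Set.mem_union, not_or] using hc
  have swap_fresh : ∀ y ∉ A ∩ B, swap y c ∈ permStabilizer 𝔸 x := fun y hy =>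
    (not_and_or.mp hy).elim (hAx.swap_mem_permStabilizer · hcA)
      (hBx.swap_mem_permStabilizer · hcB)
  exact SubmonoidClass.swap_mem_trans _ (swap_fresh a ha) (swap_comm c b ▸ swap_fresh b hb)

theorem NSupports.inter [Infinite 𝔸] (hA : A.Finite) (hB : B.Finite) (hAx : NSupports 𝔸 A x)
    (hBx : NSupports 𝔸 B x) : NSupports 𝔸 (A ∩ B) x := by
  classical
  intro π hπ
  rw [← mem_permStabilizer]
  exact Perm.mem_of_swap_mem (fun a ha b hb =>
    swap_mem_permStabilizer_of_notMem_inter hA hB hAx hBx ha hb) π.2 hπ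

end Supports

theorem stmt_3_general {𝔸 X : Type*} [Infinite 𝔸] [MulAction (FinPerm 𝔸) X]
    (hnom : ∀ y : X, ∃ A : Set 𝔸, A.Finite ∧ NSupports 𝔸 A y) (x : X) :
    (⋂₀ {A : Set 𝔸 | A.Finite ∧ NSupports 𝔸 A x}).Finite ∧
    NSupports 𝔸 (⋂₀ {A : Set 𝔸 | A.Finite ∧ NSupports 𝔸 A x}) x ∧
    ∀ B : Set 𝔸, B.Finite → NSupports 𝔸 B x →
      (⋂₀ {A : Set 𝔸 | A.Finite ∧ NSupports 𝔸 A x}) ⊆ B := by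
  have hleast : ⋂₀ {A : Set 𝔸 | A.Finite ∧ NSupports 𝔸 A x} ∈
      {A : Set 𝔸 | A.Finite ∧ NSupports 𝔸 A x} :=
    Set.sInter_mem_of_inter_mem (fun _ hA => hA.1) (hnom x) fun A hA B hB =>
      ⟨hA.1.inter_of_left B, hA.2.inter hA.1 hB.1 hB.2⟩
  exact ⟨hleast.1, hleast.2, fun B hB hBx => Set.sInter_subset_of_mem ⟨hB, hBx⟩⟩

theorem stmt_3 {𝔸 X : Type*} [Infinite 𝔸] [DecidableEq 𝔸] [MulAction (FinPerm 𝔸) X]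
    (hnom : ∀ y : X, ∃ A : Set 𝔸, A.Finite ∧ NSupports 𝔸 A y) (x : X) :
    (⋂₀ {A : Set 𝔸 | A.Finite ∧ NSupports 𝔸 A x}).Finite ∧
    NSupports 𝔸 (⋂₀ {A : Set 𝔸 | A.Finite ∧ NSupports 𝔸 A x}) x ∧
    ∀ B : Set 𝔸, B.Finite → NSupports 𝔸 B x →
      (⋂₀ {A : Set 𝔸 | A.Finite ∧ NSupports 𝔸 A x}) ⊆ B :=
  stmt_3_general hnom x
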